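/- arXiv:math/0511185 — 2 statements merged into one kernel-verified Lean document; each statement's English description precedes it below -/
import Mathlib

section
/- A subspace L of ℂ² is Lagrangian with respect to the standard Hermitian symplectic form ω((x,y),(x',y')) = x·conj(y') − y·conj(x') if and only if there exists θ ∈ [0,π) such that L = {(x,y) ∈ ℂ² : cos θ · x + sin θ · y = 0}. -/
open Complex

/-- The standard Hermitian symplectic form on ℂ². -/
noncomputable def omegaC2 (v w : ℂ × ℂ) : ℂ :=
  v.1 * starRingEnd ℂ w.2 - v.2 * starRingEnd ℂ w.1

private lemma aux_angle (c s : ℝ) (h : c ^ 2 + s ^ 2 = 1) :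
    ∃ θ ∈ Set.Ico (0 : ℝ) Real.pi,
      (Real.cos θ = c ∧ Real.sin θ = s) ∨ (Real.cos θ = -c ∧ Real.sin θ = -s) := by
  rcases lt_trichotomy s 0 with hs | hs | hs
  · have hc1 : -1 ≤ -c := by nlinarith
    have hc2 : -c ≤ 1 := by nlinarith
    refine ⟨Real.arccos (-c), ⟨Real.arccos_nonneg _, ?_⟩, Or.inr ⟨?_, ?_⟩⟩
    · refine (Real.arccos_le_pi _).lt_of_ne fun he => ?_
      have := Real.arccos_eq_pi.mp he
      nlinarith
    · exact Real.cos_arccos hc1 hc2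
    · rw [Real.sin_arccos]
      have : 1 - (-c) ^ 2 = (-s) ^ 2 := by nlinarith
      rw [this, Real.sqrt_sq (by linarith)]
  · refine ⟨0, ⟨le_refl 0, Real.pi_pos⟩, ?_⟩
    simp only [Real.cos_zero, Real.sin_zero]
    have hcpm : c = 1 ∨ c = -1 :=
      mul_self_eq_one_iff.mp (by nlinarith : c * c = 1)
    rcases hcpm with h1 | h1
    · exact Or.inl ⟨h1.symm, hs.symm⟩
    · exact Or.inr ⟨by rw [h1]; norm_num, by rw [hs]; norm_num⟩
  · have hc1 : -1 ≤ c := by nlinarith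
    have hc2 : c ≤ 1 := by nlinarith
    refine ⟨Real.arccos c, ⟨Real.arccos_nonneg _, ?_⟩, Or.inl ⟨?_, ?_⟩⟩
    · refine (Real.arccos_le_pi _).lt_of_ne fun he => ?_
      have := Real.arccos_eq_pi.mp he
      nlinarith
    · exact Real.cos_arccos hc1 hc2
    · rw [Real.sin_arccos]
      have : 1 - c ^ 2 = s ^ 2 := by nlinarith
      rw [this, Real.sqrt_sq (by linarith)]

/-- If `L` is Lagrangian and contains the nonzero vector `μ • (s, -c)` with `c² + s² = 1`,
then `L = {p | c p₁ + s p₂ = 0}`. -/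
private lemma aux_key (c s : ℝ) (hcs : c ^ 2 + s ^ 2 = 1) (μ : ℂ) (hμ : μ ≠ 0)
    (L : Submodule ℂ (ℂ × ℂ)) (hu : ((μ * s, -(μ * c)) : ℂ × ℂ) ∈ L)
    (h : {w : ℂ × ℂ | ∀ v ∈ L, omegaC2 v w = 0} = (L : Set (ℂ × ℂ))) :
    (L : Set (ℂ × ℂ)) = {p : ℂ × ℂ | (c : ℂ) * p.1 + (s : ℂ) * p.2 = 0} := by
  have hcsC : (c : ℂ) ^ 2 + (s : ℂ) ^ 2 = 1 := by
    exact_mod_cast congrArg (fun x : ℝ => (x : ℂ)) hcs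
  ext p
  constructor
  · intro hp
    -- p ∈ L, so ω(u, p) = 0 where u = (μs, -μc) ∈ L = annihilator
    rw [← h] at hp
    have := hp _ hu
    unfold omegaC2 at this
    simp only at this
    have h2 : μ * ((c : ℂ) * starRingEnd ℂ p.1 + (s : ℂ) * starRingEnd ℂ p.2) = 0 := by
      linear_combination this
    have h3 : (c : ℂ) * starRingEnd ℂ p.1 + (s : ℂ) * starRingEnd ℂ p.2 = 0 :=
      (mul_eq_zero.mp h2).resolve_left hμ
    have h4 : starRingEnd ℂ ((c : ℂ) * p.1 + (s : ℂ) * p.2) = 0 := by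
      rw [map_add, map_mul, map_mul, Complex.conj_ofReal, Complex.conj_ofReal]
      exact h3
    have := congrArg (starRingEnd ℂ) h4
    simpa using this
  · intro hp
    simp only [Set.mem_setOf_eq] at hp
    have key : p = (((s : ℂ) * p.1 - (c : ℂ) * p.2) / μ) • ((μ * s, -(μ * c)) : ℂ × ℂ) := by
      have h1 : p.1 = (((s : ℂ) * p.1 - (c : ℂ) * p.2) / μ) * (μ * s) := by
        rw [div_mul_eq_mul_div, eq_div_iff hμ]
        linear_combination μ * (c : ℂ) * hp - μ * p.1 * hcsC
      have h2 : p.2 = (((s : ℂ) * p.1 - (c : ℂ) * p.2) / μ) * (-(μ * c)) := by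
        rw [div_mul_eq_mul_div, eq_div_iff hμ]
        linear_combination μ * (s : ℂ) * hp - μ * p.2 * hcsC
      exact Prod.ext h1 h2
    rw [key]
    exact Submodule.smul_mem L _ hu

/-- A subspace `L ⊆ ℂ²` is Lagrangian (equal to its ω-annihilator) iff
`L = {(x,y) | cos θ · x + sin θ · y = 0}` for some `θ ∈ [0, π)`. -/
theorem lagrangian_C2_iff_angle (L : Submodule ℂ (ℂ × ℂ)) :
    ({w : ℂ × ℂ | ∀ v ∈ L, omegaC2 v w = 0} = (L : Set (ℂ × ℂ))) ↔
      ∃ θ ∈ Set.Ico (0 : ℝ) Real.pi,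
        (L : Set (ℂ × ℂ)) =
          {p : ℂ × ℂ | (Real.cos θ : ℂ) * p.1 + (Real.sin θ : ℂ) * p.2 = 0} := by
  constructor
  · intro h
    -- First, find a nonzero vector in L
    have hne : ∃ u ∈ L, u ≠ (0 : ℂ × ℂ) := by
      by_contra hcon
      push_neg at hcon
      have h10 : ((1, 0) : ℂ × ℂ) ∈ {w : ℂ × ℂ | ∀ v ∈ L, omegaC2 v w = 0} := by
        intro v hv
        have : v = 0 := hcon v hv
        simp [this, omegaC2]
      rw [h] at h10
      have := hcon _ h10
      simp [Prod.ext_iff] at this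
    obtain ⟨u, huL, hune⟩ := hne
    -- ω(u, u) = 0 since u ∈ L = annihilator
    have hself : omegaC2 u u = 0 := by
      have hu' : u ∈ {w : ℂ × ℂ | ∀ v ∈ L, omegaC2 v w = 0} := by rw [h]; exact huL
      exact hu' u huL
    unfold omegaC2 at hself
    set a := u.1 with ha
    set b := u.2 with hb
    -- a * conj b is real
    have hreal : starRingEnd ℂ (a * starRingEnd ℂ b) = a * starRingEnd ℂ b := by
      rw [map_mul, Complex.conj_conj]
      linear_combination -hself
    -- Find c s real with c²+s²=1 and u = μ • (s, -c)
    have hstruct : ∃ (c s : ℝ) (μ : ℂ), μ ≠ 0 ∧ c ^ 2 + s ^ 2 = 1 ∧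
        a = μ * s ∧ b = -(μ * c) := by
      by_cases hb0 : b = 0
      · have ha0 : a ≠ 0 := by
          intro h0
          apply hune
          have hub : u = (a, b) := rfl
          rw [hub, h0, hb0]
          rfl
        exact ⟨0, 1, a, ha0, by norm_num, by push_cast; ring, by rw [hb0]; push_cast; ring⟩
      · -- a * conj b = r real, so a = (r/|b|²) b
        obtain ⟨r, hr⟩ := Complex.conj_eq_iff_real.mp hreal
        have hb2 : (Complex.normSq b : ℂ) ≠ 0 := by
          simp [Complex.normSq_eq_zero, hb0]
        -- a = k * b with k = r / normSq b real
        set k : ℝ := r / Complex.normSq b with hk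
        have hab : a = (k : ℂ) * b := by
          have hbb : b * starRingEnd ℂ b = (Complex.normSq b : ℂ) := by
            rw [Complex.mul_conj]
          push_cast [hk]
          rw [div_mul_eq_mul_div, eq_div_iff hb2]
          calc a * (Complex.normSq b : ℂ) = (a * starRingEnd ℂ b) * b := by
                rw [← hbb]; ring
            _ = (r : ℂ) * b := by rw [hr]
        set N : ℝ := Real.sqrt (k ^ 2 + 1) with hN
        have hNpos : 0 < N := Real.sqrt_pos.mpr (by positivity)
        have hN2 : N ^ 2 = k ^ 2 + 1 := Real.sq_sqrt (by positivity)
        have hNC : (N : ℂ) ≠ 0 := by exact_mod_cast hNpos.ne'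
        refine ⟨-(1 / N), k / N, b * N, ?_, ?_, ?_, ?_⟩
        · simp [hb0, hNpos.ne']
        · field_simp
          linarith [hN2]
        · rw [hab]; push_cast; field_simp
        · push_cast; field_simp
      -- done hstruct
    obtain ⟨c, s, μ, hμ, hcs, hA, hB⟩ := hstruct
    have huL' : ((μ * s, -(μ * c)) : ℂ × ℂ) ∈ L := by
      have : u = ((μ * s, -(μ * c)) : ℂ × ℂ) := Prod.ext hA hB
      rwa [this] at huL
    have hLM := aux_key c s hcs μ hμ L huL' h
    obtain ⟨θ, hθ, hpm⟩ := aux_angle c s hcs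
    refine ⟨θ, hθ, ?_⟩
    rw [hLM]
    ext p
    simp only [Set.mem_setOf_eq]
    rcases hpm with ⟨h1, h2⟩ | ⟨h1, h2⟩
    · rw [h1, h2]
    · rw [h1, h2]
      constructor
      · intro h0
        push_cast
        linear_combination -h0
      · intro h0
        push_cast at h0
        linear_combination -h0
  · rintro ⟨θ, hθ, hLM⟩
    set c : ℝ := Real.cos θ with hc
    set s : ℝ := Real.sin θ with hs
    have hcs : (c : ℂ) ^ 2 + (s : ℂ) ^ 2 = 1 := by
      have h1 : c ^ 2 + s ^ 2 = 1 := by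
        rw [hc, hs]; exact Real.cos_sq_add_sin_sq θ
      exact_mod_cast congrArg (fun x : ℝ => (x : ℂ)) h1
    have huM : (((s : ℂ), -(c : ℂ)) : ℂ × ℂ) ∈ L := by
      rw [← SetLike.mem_coe, hLM]
      simp only [Set.mem_setOf_eq]
      ring
    ext w
    simp only [Set.mem_setOf_eq, SetLike.mem_coe]
    constructor
    · intro hw
      have := hw _ huM
      unfold omegaC2 at this
      simp only at this
      have h3 : (c : ℂ) * starRingEnd ℂ w.1 + (s : ℂ) * starRingEnd ℂ w.2 = 0 := by
        linear_combination this
      have h4 : starRingEnd ℂ ((c : ℂ) * w.1 + (s : ℂ) * w.2) = 0 := by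
        rw [map_add, map_mul, map_mul, Complex.conj_ofReal, Complex.conj_ofReal]
        exact h3
      have h5 := congrArg (starRingEnd ℂ) h4
      simp only [map_zero, map_add, map_mul, Complex.conj_conj, Complex.conj_ofReal] at h5
      rw [← SetLike.mem_coe, hLM]
      exact h5
    · intro hw v hv
      rw [← SetLike.mem_coe, hLM] at hw hv
      simp only [Set.mem_setOf_eq] at hw hv
      have hw' : (c : ℂ) * starRingEnd ℂ w.1 + (s : ℂ) * starRingEnd ℂ w.2 = 0 := by
        have := congrArg (starRingEnd ℂ) hw
        simpa using this
      unfold omegaC2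
      linear_combination ((c : ℂ) * starRingEnd ℂ w.2 - (s : ℂ) * starRingEnd ℂ w.1) * hv
        + ((s : ℂ) * v.1 - (c : ℂ) * v.2) * hw'
        - (v.1 * starRingEnd ℂ w.2 - v.2 * starRingEnd ℂ w.1) * hcs
end

section
/- Let c ∈ ℝ, let t > 1 be such that log x > c for all x ≥ t, let ξ ≥ 0, and let k ∈ ℕ. Then for Re(s) > −ξ sufficiently large, ∫_t^∞ x^{−2s−2ξ−1} (c − log x)^k dx = Σ_{j=0}^{k} σ_{kj} / (s+ξ)^{j+1} plus an entire function of s, where σ_{kj} = (−1)^k · C(k,j) · j!/2^{j+1} · (−c)^{k−j}. -/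
/-!
The substitution `x = e^y` turns `∫_1^∞ x^(-a-1) (log x)^j dx` into the Laplace integral
`∫_0^∞ y^j e^(-a y) dy = j! / a^(j+1)` (integration by parts in `j`), valid for `Re a > 0`.
Expanding `(c - log x)^k` binomially and taking `a = 2(s + ξ)` produces the poles. What
separates `∫_t^∞` from `∫_1^∞` is `∫_1^t`, the Mellin transform of a function supported in
`[1, t]`, which is entire.
-/

open Complex MeasureTheory Set Filter Asymptotics Topology

theorem integrableOn_Ioi_pow_mul_cexp_neg_mul {a : ℂ} (ha : 0 < a.re) (j : ℕ) :
    IntegrableOn (fun y : ℝ => (y : ℂ) ^ j * cexp (-(a * y))) (Ioi 0) := by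
  refine Integrable.mono' (integrableOn_rpow_mul_exp_neg_mul_rpow (s := j) (p := 1)
    (by linarith [j.cast_nonneg (α := ℝ)]) one_pos ha) (by fun_prop) ?_
  filter_upwards [ae_restrict_mem measurableSet_Ioi] with y (hy : 0 < y)
  simp [norm_exp, abs_of_pos hy]

theorem integral_Ioi_pow_mul_cexp_neg_mul {a : ℂ} (ha : 0 < a.re) (j : ℕ) :
    ∫ y in Ioi (0 : ℝ), (y : ℂ) ^ j * cexp (-(a * y)) = j.factorial / a ^ (j + 1) := by
  have ha0 : a ≠ 0 := by rintro rfl; simp at ha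
  induction j with
  | zero => simpa [neg_div] using integral_exp_mul_complex_Ioi (a := -a) (by simpa using ha) 0
  | succ j ih =>
    set u : ℝ → ℂ := fun y => (y : ℂ) ^ (j + 1)
    set v : ℝ → ℂ := fun y => -cexp (-(a * y)) / a
    have hu (y : ℝ) : HasDerivAt u ((j + 1) * (y : ℂ) ^ j) y := by
      simpa using (hasDerivAt_pow (j + 1) (y : ℂ)).comp_ofReal
    have hv (y : ℝ) : HasDerivAt v (cexp (-(a * y))) y := by
      refine (((hasDerivAt_id (y : ℂ)).const_mul a).neg.cexp.neg.div_const a).comp_ofReal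
        |>.congr_deriv ?_
      field_simp
      simp
    have hzero : Tendsto (u * v) (𝓝[>] 0) (𝓝 0) :=
      ((by fun_prop : Continuous (u * v)).tendsto' 0 0 (by simp [u, v])).mono_left
        nhdsWithin_le_nhds
    have htop : Tendsto (u * v) atTop (𝓝 0) := by
      have hdecay :=
        (tendsto_rpow_mul_exp_neg_mul_atTop_nhds_zero (j + 1 : ℕ) a.re ha).div_const ‖a‖
      simp only [Real.rpow_natCast, zero_div] at hdecay
      refine squeeze_zero_norm' ?_ hdecay
      filter_upwards [eventually_ge_atTop 0] with y hy
      simp [u, v, norm_exp, abs_of_nonneg hy, mul_div_assoc]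
    have hparts := integral_Ioi_mul_deriv_eq_deriv_mul (a := 0) (fun y _ => hu y) (fun y _ => hv y)
      (integrableOn_Ioi_pow_mul_cexp_neg_mul ha (j + 1))
      (IntegrableOn.congr_fun
        ((integrableOn_Ioi_pow_mul_cexp_neg_mul ha j).const_mul (-(j + 1) / a))
        (fun y _ => by simp only [Pi.mul_apply, v]; ring) measurableSet_Ioi)
      hzero htop
    have hrhs : ∫ y in Ioi (0 : ℝ), (j + 1) * (y : ℂ) ^ j * v y
        = -((j + 1) / a) * ∫ y in Ioi (0 : ℝ), (y : ℂ) ^ j * cexp (-(a * y)) := by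
      rw [← integral_const_mul]
      congr 1 with y
      simp only [v]
      ring
    rw [hparts, hrhs, ih, Nat.factorial_succ]
    push_cast
    field_simp
    ring

theorem inv_smul_log_pow_mul_cexp {x : ℝ} (hx : 0 < x) (a : ℂ) (j : ℕ) :
    x⁻¹ • ((Real.log x : ℂ) ^ j * cexp (-(a * Real.log x)))
      = (x : ℂ) ^ (-a - 1) * (Real.log x : ℂ) ^ j := by
  have hx0 : (x : ℂ) ≠ 0 := ofReal_ne_zero.mpr hx.ne'
  rw [cpow_sub _ _ hx0, cpow_one, cpow_def_of_ne_zero hx0, ← ofReal_log hx.le, real_smul,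
    ofReal_inv]
  ring_nf

theorem integrableOn_Ioi_one_cpow_mul_log_pow {a : ℂ} (ha : 0 < a.re) (j : ℕ) :
    IntegrableOn (fun x : ℝ => (x : ℂ) ^ (-a - 1) * (Real.log x : ℂ) ^ j) (Ioi 1) := by
  have hlog := (integrableOn_comp_log_Ioi (fun y : ℝ => (y : ℂ) ^ j * cexp (-(a * y)))
    one_pos).mpr (by simpa using integrableOn_Ioi_pow_mul_cexp_neg_mul ha j)
  exact hlog.congr_fun (fun x hx => inv_smul_log_pow_mul_cexp (one_pos.trans hx) a j)
    measurableSet_Ioi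

theorem integral_Ioi_one_cpow_mul_log_pow {a : ℂ} (ha : 0 < a.re) (j : ℕ) :
    ∫ x in Ioi (1 : ℝ), (x : ℂ) ^ (-a - 1) * (Real.log x : ℂ) ^ j
      = j.factorial / a ^ (j + 1) := by
  rw [← integral_Ioi_pow_mul_cexp_neg_mul ha j, ← Real.log_one,
    ← integral_comp_log_Ioi _ one_pos]
  exact setIntegral_congr_fun measurableSet_Ioi
    (fun x hx => (inv_smul_log_pow_mul_cexp (one_pos.trans hx) a j).symm)

theorem differentiable_mellin_of_support_subset_Icc {E : Type*} [NormedAddCommGroup E]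
    [NormedSpace ℂ E] {f : ℝ → E} {α β : ℝ} (hα : 0 < α) (hf : Integrable f)
    (hsupp : Function.support f ⊆ Icc α β) : Differentiable ℂ (mellin f) := by
  have hzero {l : Filter ℝ} (hl : ∀ᶠ x in l, x ∉ Icc α β) (g : ℝ → ℝ) : f =O[l] g :=
    (isBigO_zero g l).congr' (hl.mono fun x hx => (Function.notMem_support.mp
      fun h => hx (hsupp h)).symm) EventuallyEq.rfl
  intro s
  refine mellin_differentiableAt_of_isBigO_rpow (a := s.re + 1) (b := s.re - 1)
    (hf.locallyIntegrable.locallyIntegrableOn _) (hzero ?_ _) (lt_add_one _) (hzero ?_ _)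
    (sub_one_lt _)
  · filter_upwards [eventually_gt_atTop β] with x hx using fun h => hx.not_ge h.2
  · filter_upwards [nhdsWithin_le_nhds (Iio_mem_nhds hα)] with x hx using fun h => hx.not_ge h.1

theorem mellin_indicator_Ioc {E : Type*} [NormedAddCommGroup E] [NormedSpace ℂ E]
    (f : ℝ → E) {α : ℝ} (hα : 0 ≤ α) (β : ℝ) (s : ℂ) :
    mellin ((Ioc α β).indicator f) s = ∫ x in Ioc α β, (x : ℂ) ^ (s - 1) • f x := by
  simp_rw [mellin, ← indicator_smul_apply (Ioc α β) (fun x : ℝ => (x : ℂ) ^ (s - 1)) f]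
  rw [setIntegral_indicator measurableSet_Ioc,
    inter_eq_right.mpr (Ioc_subset_Ioi_self.trans (Ioi_subset_Ioi hα))]

theorem integrable_indicator_Ioc_sub_log_pow (c : ℂ) {α : ℝ} (hα : 0 < α) (β : ℝ)
    (k : ℕ) :
    Integrable ((Ioc α β).indicator fun x => (c - Real.log x) ^ k) := by
  refine (integrable_indicator_iff measurableSet_Ioc).mpr
    ((ContinuousOn.integrableOn_Icc ?_).mono_set Ioc_subset_Icc_self)
  have hlog : ContinuousOn Real.log (Icc α β) :=
    Real.continuousOn_log.mono fun x hx => (hα.trans_le hx.1).ne'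
  fun_prop

theorem mul_sub_pow_eq_sum {R : Type*} [CommRing R] (z c L : R) (k : ℕ) :
    z * (c - L) ^ k
      = ∑ j ∈ Finset.range (k + 1), (-1) ^ k * k.choose j * (-c) ^ (k - j) * (z * L ^ j) := by
  rw [show c - L = -1 * (L + -c) by ring, mul_pow, add_pow, Finset.mul_sum, Finset.mul_sum]
  exact Finset.sum_congr rfl fun j _ => by ring

theorem integrableOn_Ioi_one_cpow_mul_sub_log_pow {a : ℂ} (ha : 0 < a.re) (c : ℂ) (k : ℕ) :
    IntegrableOn (fun x : ℝ => (x : ℂ) ^ (-a - 1) * (c - Real.log x) ^ k) (Ioi 1) := by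
  simp_rw [mul_sub_pow_eq_sum]
  exact integrable_finsetSum _ fun j _ => (integrableOn_Ioi_one_cpow_mul_log_pow ha j).const_mul _

theorem integral_Ioi_one_cpow_mul_sub_log_pow {a : ℂ} (ha : 0 < a.re) (c : ℂ) (k : ℕ) :
    ∫ x in Ioi (1 : ℝ), (x : ℂ) ^ (-a - 1) * (c - Real.log x) ^ k
      = ∑ j ∈ Finset.range (k + 1),
          (-1) ^ k * k.choose j * (-c) ^ (k - j) * (j.factorial / a ^ (j + 1)) := by
  simp_rw [mul_sub_pow_eq_sum]
  rw [integral_finsetSum _ fun j _ => (integrableOn_Ioi_one_cpow_mul_log_pow ha j).const_mul _]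
  simp_rw [integral_const_mul, integral_Ioi_one_cpow_mul_log_pow ha]

theorem integral_pole_decomposition_general (c : ℝ) (t : ℝ) (ht : 1 < t)
    (ξ : ℝ) (k : ℕ) :
    ∃ E : ℂ → ℂ, Differentiable ℂ E ∧
      ∀ s : ℂ, 0 < s.re + ξ →
        (∫ x in Set.Ioi t, (x : ℂ) ^ (-2 * s - 2 * (ξ : ℂ) - 1) *
            ((c : ℂ) - (Real.log x : ℂ)) ^ k) =
          (∑ j ∈ Finset.range (k + 1),
            ((-1 : ℂ) ^ k * (k.choose j) * ((j.factorial : ℂ) / 2 ^ (j + 1)) *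
              (-(c : ℂ)) ^ (k - j)) / (s + ξ) ^ (j + 1)) + E s := by
  set g : ℝ → ℂ := (Ioc 1 t).indicator fun x => ((c : ℂ) - Real.log x) ^ k
  refine ⟨fun s => -mellin g (-(2 * (s + ξ))), ?_, fun s hs => ?_⟩
  · exact ((differentiable_mellin_of_support_subset_Icc one_pos
      (integrable_indicator_Ioc_sub_log_pow c one_pos t k)
      (support_indicator_subset.trans Ioc_subset_Icc_self)).comp (by fun_prop)).neg
  have ha : 0 < (2 * (s + ξ)).re := by simpa using hs
  have hmellin : mellin g (-(2 * (s + ξ))) = ∫ x in Ioc 1 t,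
      (x : ℂ) ^ (-(2 * (s + ξ)) - 1) * ((c : ℂ) - Real.log x) ^ k :=
    mellin_indicator_Ioc _ zero_le_one _ _
  have hsplit := intervalIntegral.integral_Ioi_sub_Ioi
    (integrableOn_Ioi_one_cpow_mul_sub_log_pow ha c k) ht.le
  rw [integral_Ioi_one_cpow_mul_sub_log_pow ha, intervalIntegral.integral_of_le ht.le,
    ← hmellin] at hsplit
  have hpoles : ∑ j ∈ Finset.range (k + 1), (-1) ^ k * k.choose j * (-(c : ℂ)) ^ (k - j) *
      (j.factorial / (2 * (s + ξ)) ^ (j + 1)) = ∑ j ∈ Finset.range (k + 1),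
        ((-1 : ℂ) ^ k * (k.choose j) * ((j.factorial : ℂ) / 2 ^ (j + 1)) *
          (-(c : ℂ)) ^ (k - j)) / (s + ξ) ^ (j + 1) :=
    Finset.sum_congr rfl fun j _ => by rw [mul_pow, ← div_div]; ring
  rw [show -2 * s - 2 * (ξ : ℂ) - 1 = -(2 * (s + ξ)) - 1 by ring, ← hpoles]
  linear_combination -hsplit

/-- For `c ∈ ℝ`, `t > 1` with `log x > c` for `x ≥ t`, `ξ ≥ 0` and `k ∈ ℕ`, the integral
`∫_t^∞ x^{−2s−2ξ−1}(c − log x)^k dx` equals `Σ_{j=0}^k σ_{kj}/(s+ξ)^{j+1}` plus an entire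
function of `s`, where `σ_{kj} = (−1)^k C(k,j) (j!/2^{j+1}) (−c)^{k−j}`; the integral
formula holds on the half-plane `Re s + ξ > 0` of convergence. -/
theorem integral_pole_decomposition (c : ℝ) (t : ℝ) (ht : 1 < t)
    (hlog : ∀ x : ℝ, t ≤ x → c < Real.log x) (ξ : ℝ) (hξ : 0 ≤ ξ) (k : ℕ) :
    ∃ E : ℂ → ℂ, Differentiable ℂ E ∧
      ∀ s : ℂ, 0 < s.re + ξ →
        (∫ x in Set.Ioi t, (x : ℂ) ^ (-2 * s - 2 * (ξ : ℂ) - 1) *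
            ((c : ℂ) - (Real.log x : ℂ)) ^ k) =
          (∑ j ∈ Finset.range (k + 1),
            ((-1 : ℂ) ^ k * (k.choose j) * ((j.factorial : ℂ) / 2 ^ (j + 1)) *
              (-(c : ℂ)) ^ (k - j)) / (s + ξ) ^ (j + 1)) + E s :=
  integral_pole_decomposition_general c t ht ξ k
end
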